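/- Let ⋔ : E ⥤ B be a state-parameter fibration with functors q and p. For morphisms π_X : X ⟶ Y and π_Z : Z ⟶ Y in B, the fibered product q(Z) ×_{qY} p(X) (a pullback in E of q(π_Z) and the composite p(X) ⟶ q(X) ⟶ q(Y)) satisfies q(Z) ×_{qY} p(X) ≅ p(Z) ⊗_{qY} p(X) ≅ p(⋔(q(Z) ×_{qY} p(X))). -/

import Mathlib

open CategoryTheory Limits MonoidalCategory MonoidalClosed

universe v₁ v₂ u₁ u₂

variable {E : Type u₁} {B : Type u₂} [Category.{v₁} E] [Category.{v₂} B]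

/-- A morphism `f : X ⟶ Y` of `E` is *cartesian* with respect to a functor `F : E ⥤ B`. -/
def IsCart (F : E ⥤ B) {X Y : E} (f : X ⟶ Y) : Prop :=
  ∀ ⦃Z : E⦄ (g : Z ⟶ Y) (b : F.obj Z ⟶ F.obj X),
    F.map g = b ≫ F.map f → ∃! u : Z ⟶ X, F.map u = b ∧ u ≫ f = g

/-- A *state-parameter fibration* (Definition 2.10): a pullback fibration `⋔ = sharp` from a
symmetric monoidal closed category `E` of states to a locally cartesian closed category `B`
of parameters, such that `⋔` preserves the monoidal closed structure, the tensor product of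
cartesian arrows is cartesian, each slice `E/qX` is monoidal closed via the fibered tensor
`⊗_{qX}` and fibered hom `⊸_{qX}` (given by cartesian liftings), together with the
parameterized-terminal functor `q` (full and faithful right adjoint of `⋔` with identity
counit), the parameterized-unit functor `p` (cartesian liftings of the unique maps to the
terminal object, with `p 1 = I`), and a right adjoint `♭` of `p`. -/
structure StateParamFib (E : Type u₁) (B : Type u₂) [Category.{v₁} E] [Category.{v₂} B]
    [MonoidalCategory E] [SymmetricCategory E] [MonoidalClosed E] [HasTerminal E]
    [CartesianMonoidalCategory B] [MonoidalClosed B] [HasPullbacks B] where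
  /-- the fibration `⋔ : E ⥤ B` -/
  sharp : E ⥤ B
  /-- `⋔` is a Grothendieck fibration -/
  isFib : ∀ ⦃A : E⦄ ⦃X : B⦄ (a : X ⟶ sharp.obj A),
    ∃ (L : E) (f : L ⟶ A) (hL : sharp.obj L = X),
      sharp.map f = eqToHom hL ≫ a ∧ IsCart sharp f
  /-- `⋔` preserves the terminal object -/
  presTerminal : IsTerminal (sharp.obj (⊤_ E))
  /-- `B` is locally cartesian closed -/
  overCFP : ∀ X : B, CartesianMonoidalCategory (Over X)
  overCC : ∀ X : B, @MonoidalClosed (Over X) _ (overCFP X).toMonoidalCategory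
  /-- `⋔` is a monoidal closed functor -/
  sharpUnitIso : sharp.obj (𝟙_ E) ≅ 𝟙_ B
  sharpTensorIso : ∀ A C : E, sharp.obj (A ⊗ C) ≅ sharp.obj A ⊗ sharp.obj C
  sharpHomIso : ∀ A C : E,
    sharp.obj ((ihom A).obj C) ≅ (ihom (sharp.obj A)).obj (sharp.obj C)
  /-- the tensor product of cartesian arrows is cartesian -/
  tensorCart : ∀ {A A' C C' : E} (f : A ⟶ A') (g : C ⟶ C'),
    IsCart sharp f → IsCart sharp g → IsCart sharp (f ⊗ₘ g)
  /-- the parameterized-terminal functor `q`, a full and faithful right adjoint of `⋔`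
  whose counit is strictly the identity -/
  q : B ⥤ E
  adj : sharp ⊣ q
  qFull : q.Full
  qFaithful : q.Faithful
  sharpQObj : ∀ X : B, sharp.obj (q.obj X) = X
  counitId : ∀ X : B, adj.counit.app X = eqToHom (sharpQObj X)
  /-- the parameterized-unit functor `p`, with `p 1 = I`, given by cartesian liftings -/
  p : B ⥤ E
  pTop : p.obj (𝟙_ B) = 𝟙_ E
  sharpPObj : ∀ X : B, sharp.obj (p.obj X) = X
  sharpPMap : ∀ {X Y : B} (f : X ⟶ Y),
    sharp.map (p.map f) = eqToHom (sharpPObj X) ≫ f ≫ eqToHom (sharpPObj Y).symm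
  pCart : ∀ {X Y : B} (f : X ⟶ Y), IsCart sharp (p.map f)
  /-- the right adjoint `♭` of `p` -/
  flat : E ⥤ B
  padj : p ⊣ flat
  /-- the fibered monoidal product `A ⊗_{qX} C` of objects `a : A ⟶ q X`, `c : C ⟶ q X`
  of `E / q X`: the cartesian lifting of the inclusion `⋔A ×_X ⋔C ↪ ⋔A × ⋔C` at `A ⊗ C` -/
  ft : ∀ {X : B} (A C : E), (A ⟶ q.obj X) → (C ⟶ q.obj X) → E
  ftHom : ∀ {X : B} {A C : E} (a : A ⟶ q.obj X) (c : C ⟶ q.obj X), ft A C a c ⟶ A ⊗ C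
  ftCart : ∀ {X : B} {A C : E} (a : A ⟶ q.obj X) (c : C ⟶ q.obj X), IsCart sharp (ftHom a c)
  ftBase : ∀ {X : B} {A C : E} (a : A ⟶ q.obj X) (c : C ⟶ q.obj X),
    sharp.obj (ft A C a c) =
      pullback (sharp.map a ≫ eqToHom (sharpQObj X)) (sharp.map c ≫ eqToHom (sharpQObj X))
  ftMapEq : ∀ {X : B} {A C : E} (a : A ⟶ q.obj X) (c : C ⟶ q.obj X),
    sharp.map (ftHom a c) = eqToHom (ftBase a c) ≫
      CartesianMonoidalCategory.lift (pullback.fst _ _) (pullback.snd _ _) ≫ (sharpTensorIso A C).inv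
  /-- the structure map `A ⊗_{qX} C ⟶ q X` -/
  ftP : ∀ {X : B} {A C : E} (a : A ⟶ q.obj X) (c : C ⟶ q.obj X), ft A C a c ⟶ q.obj X
  ftP_eq : ∀ {X : B} {A C : E} (a : A ⟶ q.obj X) (c : C ⟶ q.obj X),
    ftP a c = adj.homEquiv _ _
      (eqToHom (ftBase a c) ≫ pullback.fst _ _ ≫ sharp.map a ≫ eqToHom (sharpQObj X))
  /-- the projection of `A ⊗_{qX} C` to the parameterized terminal `q (⋔ C)` of the second
  factor (used for dependent monoidal products) -/
  ftPR : ∀ {X : B} {A C : E} (a : A ⟶ q.obj X) (c : C ⟶ q.obj X),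
    ft A C a c ⟶ q.obj (sharp.obj C)
  ftPR_eq : ∀ {X : B} {A C : E} (a : A ⟶ q.obj X) (c : C ⟶ q.obj X),
    ftPR a c = adj.homEquiv _ _ (eqToHom (ftBase a c) ≫ pullback.snd _ _)
  /-- functoriality of the fibered tensor in the first variable, over `q X` -/
  ftMapL : ∀ {X : B} {A A' C : E} {a : A ⟶ q.obj X} {a' : A' ⟶ q.obj X}
    (c : C ⟶ q.obj X) (g : A ⟶ A'), g ≫ a' = a → (ft A C a c ⟶ ft A' C a' c)
  ftMapL_comm : ∀ {X : B} {A A' C : E} {a : A ⟶ q.obj X} {a' : A' ⟶ q.obj X}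
    (c : C ⟶ q.obj X) (g : A ⟶ A') (hg : g ≫ a' = a),
    ftMapL c g hg ≫ ftHom a' c = ftHom a c ≫ (g ⊗ₘ 𝟙 C)
  /-- the fibered function space `A ⊸_{qX} C` -/
  fh : ∀ {X : B} (A C : E), (A ⟶ q.obj X) → (C ⟶ q.obj X) → E
  fhProj : ∀ {X : B} {A C : E} (a : A ⟶ q.obj X) (c : C ⟶ q.obj X), fh A C a c ⟶ q.obj X
  /-- evaluation (counit of `- ⊗_{qX} A ⊣ A ⊸_{qX} -`) -/
  fhEv : ∀ {X : B} {A C : E} (a : A ⟶ q.obj X) (c : C ⟶ q.obj X),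
    ft (fh A C a c) A (fhProj a c) a ⟶ C
  fhEv_over : ∀ {X : B} {A C : E} (a : A ⟶ q.obj X) (c : C ⟶ q.obj X),
    fhEv a c ≫ c = ftP (fhProj a c) a
  /-- each slice `E / q X` is monoidal closed: `- ⊗_{qX} A ⊣ A ⊸_{qX} -` -/
  fhUP : ∀ {X : B} {A C D : E} (a : A ⟶ q.obj X) (c : C ⟶ q.obj X) (d : D ⟶ q.obj X)
    (f : ft D A d a ⟶ C), f ≫ c = ftP d a →
    ∃! g : {g : D ⟶ fh A C a c // g ≫ fhProj a c = d},
      ftMapL a g.1 g.2 ≫ fhEv a c = f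

/-!
Write `Q = Z ×_Y X`. Since `p` sends morphisms to cartesian ones and a map into `q X` is
determined by its image under `⋔`, the square `p Q ⟶ q Z, p Q ⟶ p X` over
`q π_Z, p X ⟶ q Y` is a pullback, so `q Z ×_{qY} p X ≅ p Q`. On the other side,
`p Z ⊗_{qY} p X` is cartesian over `I ⊗ I ≅ I` (cartesian maps are closed under `⊗` and
composition), so it is `p` of its base, and its base is `Q` by construction of `⊗_{qY}`.
-/

namespace IsCart

variable {F : E ⥤ B}

lemma of_isIso {A T : E} (f : A ⟶ T) [IsIso f] : IsCart F f := by
  intro Z g b hb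
  refine ⟨g ≫ inv f, ⟨?_, by simp⟩, ?_⟩
  · rw [F.map_comp, hb, Category.assoc, ← F.map_comp, IsIso.hom_inv_id, F.map_id,
      Category.comp_id]
  · rintro v ⟨-, hv⟩
    simp [← hv]

lemma comp {A T U : E} {f : A ⟶ T} {g : T ⟶ U} (hf : IsCart F f) (hg : IsCart F g) :
    IsCart F (f ≫ g) := by
  intro Z h b hb
  obtain ⟨u₁, ⟨hu₁, hu₁'⟩, uq₁⟩ := hg h (b ≫ F.map f) (by rw [hb, F.map_comp, Category.assoc])
  obtain ⟨u₂, ⟨hu₂, hu₂'⟩, uq₂⟩ := hf u₁ b hu₁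
  refine ⟨u₂, ⟨hu₂, by rw [← Category.assoc, hu₂', hu₁']⟩, ?_⟩
  rintro v ⟨hv₁, hv₂⟩
  exact uq₂ v ⟨hv₁, uq₁ (v ≫ f) ⟨by rw [F.map_comp, hv₁], by rw [Category.assoc, hv₂]⟩⟩

lemma nonempty_iso {A A' T : E} {f : A ⟶ T} {f' : A' ⟶ T} (hf : IsCart F f)
    (hf' : IsCart F f') (e : F.obj A ≅ F.obj A') (he : F.map f = e.hom ≫ F.map f') :
    Nonempty (A ≅ A') := by
  obtain ⟨u, ⟨hu, hu'⟩, -⟩ := hf' f e.hom he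
  obtain ⟨v, ⟨hv, hv'⟩, -⟩ := hf f' e.inv (by rw [he, e.inv_hom_id_assoc])
  obtain ⟨w, -, uniq⟩ := hf f (𝟙 _) (by simp)
  obtain ⟨w', -, uniq'⟩ := hf' f' (𝟙 _) (by simp)
  refine ⟨⟨u, v, ?_, ?_⟩⟩
  · rw [uniq (u ≫ v) ⟨by simp [hu, hv], by rw [Category.assoc, hv', hu']⟩,
      uniq (𝟙 A) ⟨by simp, by simp⟩]
  · rw [uniq' (v ≫ u) ⟨by simp [hu, hv], by rw [Category.assoc, hu', hv']⟩,
      uniq' (𝟙 A') ⟨by simp, by simp⟩]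

end IsCart

namespace StateParamFib

variable [MonoidalCategory E] [SymmetricCategory E] [MonoidalClosed E] [HasTerminal E]
  [CartesianMonoidalCategory B] [MonoidalClosed B] [HasPullbacks B] (S : StateParamFib E B)

/-- The canonical map `p X ⟶ q X` followed by `q f`. -/
def pToQ {X Y : B} (f : X ⟶ Y) : S.p.obj X ⟶ S.q.obj Y :=
  S.adj.homEquiv _ _ (eqToHom (S.sharpPObj X) ≫ f)

lemma homEquiv_symm_eq {A : E} {X : B} (t : A ⟶ S.q.obj X) :
    (S.adj.homEquiv A X).symm t = S.sharp.map t ≫ eqToHom (S.sharpQObj X) := by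
  rw [Adjunction.homEquiv_counit, S.counitId]

lemma homEquiv_symm_pToQ {X Y : B} (f : X ⟶ Y) :
    (S.adj.homEquiv _ _).symm (S.pToQ f) = eqToHom (S.sharpPObj X) ≫ f := by
  simp [pToQ]

lemma sharp_map_pToQ {X Y : B} (f : X ⟶ Y) :
    S.sharp.map (S.pToQ f) ≫ eqToHom (S.sharpQObj Y) = eqToHom (S.sharpPObj X) ≫ f := by
  rw [← homEquiv_symm_eq, homEquiv_symm_pToQ]

lemma pToQ_comp_q_map {X Y Y' : B} (f : X ⟶ Y) (g : Y ⟶ Y') :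
    S.pToQ f ≫ S.q.map g = S.pToQ (f ≫ g) := by
  rw [pToQ, pToQ, ← Adjunction.homEquiv_naturality_right, Category.assoc]

lemma p_map_comp_pToQ {X' X Y : B} (f : X' ⟶ X) (g : X ⟶ Y) :
    S.p.map f ≫ S.pToQ g = S.pToQ (f ≫ g) := by
  rw [pToQ, pToQ, ← Adjunction.homEquiv_naturality_left, S.sharpPMap]
  simp

lemma homEquiv_symm_comp_pToQ {A : E} {X Y : B} (v : A ⟶ S.p.obj X) (f : X ⟶ Y) :
    (S.adj.homEquiv _ _).symm (v ≫ S.pToQ f) =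
      (S.sharp.map v ≫ eqToHom (S.sharpPObj X)) ≫ f := by
  rw [Adjunction.homEquiv_naturality_left_symm, homEquiv_symm_pToQ, Category.assoc]

lemma sharp_map_comp_p_map {A : E} {X Y : B} (v : A ⟶ S.p.obj X) (f : X ⟶ Y) :
    S.sharp.map (v ≫ S.p.map f) ≫ eqToHom (S.sharpPObj Y) =
      (S.sharp.map v ≫ eqToHom (S.sharpPObj X)) ≫ f := by
  simp [S.sharpPMap]

lemma hom_ext_sharp_unit {A : B} (f g : A ⟶ S.sharp.obj (𝟙_ E)) : f = g :=
  (cancel_mono S.sharpUnitIso.hom).1 (CartesianMonoidalCategory.toUnit_unique _ _)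

lemma isCart_p_toUnit (X : B) :
    IsCart S.sharp (S.p.map (CartesianMonoidalCategory.toUnit X) ≫ eqToHom S.pTop) :=
  (S.pCart _).comp (IsCart.of_isIso _)

lemma nonempty_iso_p_sharp_of_isCart {A : E} {f : A ⟶ 𝟙_ E} (hf : IsCart S.sharp f) :
    Nonempty (A ≅ S.p.obj (S.sharp.obj A)) :=
  hf.nonempty_iso (S.isCart_p_toUnit _) (eqToIso (S.sharpPObj _).symm) (S.hom_ext_sharp_unit _ _)

lemma nonempty_iso_p_sharp_ft {Y : B} {A C : E} (a : A ⟶ S.q.obj Y) (c : C ⟶ S.q.obj Y)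
    {fA : A ⟶ 𝟙_ E} {fC : C ⟶ 𝟙_ E} (hA : IsCart S.sharp fA) (hC : IsCart S.sharp fC) :
    Nonempty (S.ft A C a c ≅ S.p.obj (S.sharp.obj (S.ft A C a c))) :=
  S.nonempty_iso_p_sharp_of_isCart
    ((S.ftCart a c).comp ((S.tensorCart _ _ hA hC).comp (IsCart.of_isIso (λ_ (𝟙_ E)).hom)))

section

variable {X Y Z : B} (πX : X ⟶ Y) (πZ : Z ⟶ Y)

lemma existsUnique_lift_p_pullback {T : E} (t₁ : T ⟶ S.q.obj Z) (t₂ : T ⟶ S.p.obj X)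
    (ht : t₁ ≫ S.q.map πZ = t₂ ≫ S.pToQ πX) :
    ∃! u : T ⟶ S.p.obj (pullback πZ πX),
      u ≫ S.pToQ (pullback.fst πZ πX) = t₁ ∧ u ≫ S.p.map (pullback.snd πZ πX) = t₂ := by
  set b₁ := (S.adj.homEquiv _ _).symm t₁
  set b₂ := S.sharp.map t₂ ≫ eqToHom (S.sharpPObj X)
  have hb : b₁ ≫ πZ = b₂ ≫ πX := by
    have h := congrArg (S.adj.homEquiv _ _).symm ht
    rwa [Adjunction.homEquiv_naturality_right_symm, homEquiv_symm_comp_pToQ] at h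
  set b := pullback.lift b₁ b₂ hb
  obtain ⟨u, ⟨hu, hu₂⟩, uniq⟩ := S.pCart (pullback.snd πZ πX) t₂
    (b ≫ eqToHom (S.sharpPObj _).symm)
    (by rw [S.sharpPMap, Category.assoc, eqToHom_trans_assoc, eqToHom_refl, Category.id_comp,
      pullback.lift_snd_assoc, Category.assoc, eqToHom_trans, eqToHom_refl, Category.comp_id])
  refine ⟨u, ⟨?_, hu₂⟩, fun v ⟨hv₁, hv₂⟩ => uniq v ⟨?_, hv₂⟩⟩
  · apply (S.adj.homEquiv _ _).symm.injective
    rw [homEquiv_symm_comp_pToQ, hu]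
    simp only [Category.assoc, eqToHom_trans_assoc, eqToHom_refl, Category.id_comp]
    exact pullback.lift_fst _ _ _
  · rw [← cancel_mono (eqToHom (S.sharpPObj _)), Category.assoc, eqToHom_trans, eqToHom_refl,
      Category.comp_id]
    apply pullback.hom_ext
    · rw [← homEquiv_symm_comp_pToQ, hv₁, pullback.lift_fst]
    · rw [← sharp_map_comp_p_map, hv₂, pullback.lift_snd]

lemma isPullback_p_pullback :
    IsPullback (S.pToQ (pullback.fst πZ πX)) (S.p.map (pullback.snd πZ πX)) (S.q.map πZ)
      (S.pToQ πX) := by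
  have w : S.pToQ (pullback.fst πZ πX) ≫ S.q.map πZ =
      S.p.map (pullback.snd πZ πX) ≫ S.pToQ πX := by
    rw [pToQ_comp_q_map, p_map_comp_pToQ, pullback.condition]
  have lift := fun s : PullbackCone (S.q.map πZ) (S.pToQ πX) =>
    S.existsUnique_lift_p_pullback πX πZ s.fst s.snd s.condition
  exact IsPullback.of_isLimit (PullbackCone.IsLimit.mk w (fun s => (lift s).choose)
    (fun s => (lift s).choose_spec.1.1) (fun s => (lift s).choose_spec.1.2)
    (fun s m h₁ h₂ => (lift s).choose_spec.2 m ⟨h₁, h₂⟩))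

noncomputable def sharpFtPToQIso :
    S.sharp.obj (S.ft (S.p.obj Z) (S.p.obj X) (S.pToQ πZ) (S.pToQ πX)) ≅ pullback πZ πX :=
  eqToIso (S.ftBase _ _) ≪≫
    (IsPullback.of_iso (IsPullback.of_hasPullback _ _)
      (fst' := pullback.fst _ _ ≫ eqToHom (S.sharpPObj Z))
      (snd' := pullback.snd _ _ ≫ eqToHom (S.sharpPObj X)) (Iso.refl _) (eqToIso (S.sharpPObj Z))
      (eqToIso (S.sharpPObj X)) (Iso.refl _) (by simp) (by simp) (by simp [sharp_map_pToQ])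
      (by simp [sharp_map_pToQ])).isoPullback

end

end StateParamFib

/-- Lemma B.2: for `π_X : X ⟶ Y` and `π_Z : Z ⟶ Y` in `B`, a fibered product
`q Z ×_{qY} p X` in `E` (a pullback of `q π_Z` and the canonical map `p X ⟶ q Y`)
satisfies `q Z ×_{qY} p X ≅ p Z ⊗_{qY} p X ≅ p (⋔ (q Z ×_{qY} p X))`: it is again a
parameter object. -/
theorem qz_fib_prod_px
    [MonoidalCategory E] [SymmetricCategory E] [MonoidalClosed E] [HasTerminal E]
    [CartesianMonoidalCategory B] [MonoidalClosed B] [HasPullbacks B]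
    (S : StateParamFib E B) {X Y Z : B} (πX : X ⟶ Y) (πZ : Z ⟶ Y)
    (W : E) (w₁ : W ⟶ S.q.obj Z) (w₂ : W ⟶ S.p.obj X)
    (hW : IsPullback w₁ w₂ (S.q.map πZ)
      (S.adj.homEquiv _ _ (eqToHom (S.sharpPObj X) ≫ πX))) :
    Nonempty (W ≅ S.ft (S.p.obj Z) (S.p.obj X)
        (S.adj.homEquiv _ _ (eqToHom (S.sharpPObj Z) ≫ πZ))
        (S.adj.homEquiv _ _ (eqToHom (S.sharpPObj X) ≫ πX))) ∧
      Nonempty (W ≅ S.p.obj (S.sharp.obj W)) := by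
  have eW : W ≅ S.p.obj (pullback πZ πX) := hW.isoIsPullback _ _ (S.isPullback_p_pullback πX πZ)
  obtain ⟨eT⟩ := S.nonempty_iso_p_sharp_ft (S.pToQ πZ) (S.pToQ πX)
    (S.isCart_p_toUnit Z) (S.isCart_p_toUnit X)
  refine ⟨⟨eW ≪≫ S.p.mapIso (S.sharpFtPToQIso πX πZ).symm ≪≫ eT.symm⟩, ⟨eW ≪≫ S.p.mapIso ?_⟩⟩
  exact (S.sharp.mapIso eW ≪≫ eqToIso (S.sharpPObj _)).symm
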